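/- (Randomized Kaczmarz for A, one-step expected decrease.) Let A be a p×m real matrix all of whose rows are nonzero, and let B be an n×q real matrix with full row rank (so BBᵀ is invertible and B† = Bᵀ(BBᵀ)⁻¹). Let X*, X be m×n real matrices and set C = AX*B. For i ∈ {1,…,p} set p_i = ‖A_{i,:}‖₂²/‖A‖_F² and X⁺_i = X + (A_{i,:})ᵀ(C_{i,:} − A_{i,:}XB)B†/‖A_{i,:}‖₂². Then Σ_{i=1}^{p} p_i ‖X⁺_i − X*‖_F² ≤ (1 − λ_min(AᵀA)/‖A‖_F²)·‖X − X*‖_F². -/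

import Mathlib

/-!
Write `E = X - X*`. Since `B B† = 1`, the residual row `(C_i - A_i X B) B†` equals `-A_i E`, so the
update subtracts from `E` the rank-one matrix `a_i (a_i E) / ‖a_i‖²`. Expanding the Frobenius norm,
`‖X⁺_i - X*‖² = ‖E‖² - ‖a_i E‖² / ‖a_i‖²`; averaging with weights `‖a_i‖² / ‖A‖_F²` gives
`‖E‖² - ‖A E‖_F² / ‖A‖_F²`, and `‖A E‖_F² = tr (Eᵀ (AᵀA) E) ≥ λ_min(AᵀA) ‖E‖²` because
`AᵀA - λ_min • 1` is positive semidefinite.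
-/

open Matrix

namespace Matrix

section CommRing

variable {R : Type*} [CommRing R] {l m n : Type*} [Fintype l] [Fintype m] [Fintype n]

theorem trace_transpose_mul_self_eq_sum (M : Matrix m n R) :
    trace (Mᵀ * M) = ∑ i, M i ⬝ᵥ M i := by
  simp only [trace, diag, mul_apply, transpose_apply, dotProduct]
  exact Finset.sum_comm

theorem trace_transpose_mul_vecMulVec (E : Matrix m n R) (a : m → R) (w : n → R) :
    trace (Eᵀ * vecMulVec a w) = (a ᵥ* E) ⬝ᵥ w := by
  rw [mul_vecMulVec, trace_vecMulVec, mulVec_transpose]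

theorem trace_transpose_mul_self_sub_smul_vecMulVec (c : R) (a : m → R) (E : Matrix m n R) :
    trace ((E - c • vecMulVec a (a ᵥ* E))ᵀ * (E - c • vecMulVec a (a ᵥ* E)))
      = trace (Eᵀ * E) - 2 * c * ((a ᵥ* E) ⬝ᵥ (a ᵥ* E))
        + c ^ 2 * ((a ⬝ᵥ a) * ((a ᵥ* E) ⬝ᵥ (a ᵥ* E))) := by
  set w := a ᵥ* E
  have hcross : trace ((vecMulVec a w)ᵀ * E) = w ⬝ᵥ w := by
    rw [← trace_transpose, transpose_mul, transpose_transpose, trace_transpose_mul_vecMulVec]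
  have hsq : trace ((vecMulVec a w)ᵀ * vecMulVec a w) = (a ⬝ᵥ a) * (w ⬝ᵥ w) := by
    rw [transpose_vecMulVec, vecMulVec_mul_vecMulVec, vecMulVec_smul, trace_smul,
      trace_vecMulVec, smul_eq_mul]
  simp only [transpose_sub, transpose_smul, Matrix.sub_mul, Matrix.mul_sub, smul_mul,
    Matrix.mul_smul, trace_sub, trace_smul, trace_transpose_mul_vecMulVec, hcross, hsq,
    smul_eq_mul]
  ring

theorem kaczmarz_update_sub [DecidableEq n] (c : R) (a : m → R) (X Xs : Matrix m n R)
    {B : Matrix n l R} {Bd : Matrix l n R} (hB : B * Bd = 1) :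
    X + c • vecMulVec a (((a ᵥ* Xs) ᵥ* B - (a ᵥ* X) ᵥ* B) ᵥ* Bd) - Xs
      = (X - Xs) - c • vecMulVec a (a ᵥ* (X - Xs)) := by
  rw [← sub_vecMul, vecMul_vecMul, hB, vecMul_one, ← vecMul_sub, ← neg_sub X Xs, vecMul_neg,
    vecMulVec_neg, smul_neg]
  abel

end CommRing

section Field

variable {K : Type*} [Field K] {m n : Type*} [Fintype m] [Fintype n]

theorem isUnit_of_rank_eq_card [DecidableEq n] {M : Matrix n n K}
    (h : M.rank = Fintype.card n) : IsUnit M := by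
  rw [← mulVec_surjective_iff_isUnit]
  have hrange : LinearMap.range M.mulVecLin = ⊤ :=
    Submodule.eq_top_of_finrank_eq (by simpa [rank] using h)
  exact LinearMap.range_eq_top.mp hrange

theorem mul_transpose_mul_inv_eq_one [LinearOrder K] [IsStrictOrderedRing K] [DecidableEq m]
    {B : Matrix m n K} (hB : B.rank = Fintype.card m) : B * (Bᵀ * (B * Bᵀ)⁻¹) = 1 := by
  rw [← Matrix.mul_assoc, mul_nonsing_inv _ ((isUnit_iff_isUnit_det _).mp
    (isUnit_of_rank_eq_card (by rwa [rank_self_mul_transpose])))]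

/-- Also true when `a ⬝ᵥ a = 0`, where `1 / 0 = 0` makes both sides equal to `trace (Eᵀ * E)`. -/
theorem trace_transpose_mul_self_sub_projection (a : m → K) (E : Matrix m n K) :
    trace ((E - (1 / (a ⬝ᵥ a)) • vecMulVec a (a ᵥ* E))ᵀ *
        (E - (1 / (a ⬝ᵥ a)) • vecMulVec a (a ᵥ* E)))
      = trace (Eᵀ * E) - (a ᵥ* E) ⬝ᵥ (a ᵥ* E) / (a ⬝ᵥ a) := by
  rw [trace_transpose_mul_self_sub_smul_vecMulVec]
  rcases eq_or_ne (a ⬝ᵥ a) 0 with h | h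
  · simp [h]
  · field_simp
    ring

end Field

variable {p m n : Type*} [Fintype p] [Fintype m] [Fintype n]

theorem trace_transpose_mul_self_nonneg (M : Matrix m n ℝ) : 0 ≤ trace (Mᵀ * M) := by
  simpa using (posSemidef_conjTranspose_mul_self M).trace_nonneg

theorem mul_trace_transpose_mul_self_le [DecidableEq m] {M : Matrix m m ℝ} (hM : M.IsHermitian)
    {c : ℝ} (hc : ∀ k, c ≤ hM.eigenvalues k) (E : Matrix m n ℝ) :
    c * trace (Eᵀ * E) ≤ trace (Eᵀ * M * E) := by
  have hpsd : (M - c • 1).PosSemidef := by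
    rw [posSemidef_iff_isHermitian_and_spectrum_nonneg, ← Algebra.algebraMap_eq_smul_one,
      ← spectrum.sub_singleton_eq, hM.spectrum_real_eq_range_eigenvalues]
    refine ⟨hM.sub (isHermitian_diagonal _), ?_⟩
    rintro _ ⟨_, ⟨k, rfl⟩, _, rfl, rfl⟩
    exact sub_nonneg.mpr (hc k)
  have := (hpsd.conjTranspose_mul_mul_same E).trace_nonneg
  simp only [conjTranspose_eq_transpose_of_trivial, Matrix.mul_sub, Matrix.sub_mul, trace_sub,
    Matrix.mul_smul, smul_mul, Matrix.mul_one, trace_smul, smul_eq_mul] at this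
  linarith

theorem sum_weighted_trace_sub_le [DecidableEq m] (A : Matrix p m ℝ)
    (hAA : (Aᵀ * A).IsHermitian) (E : Matrix m n ℝ) :
    ∑ i, (A i ⬝ᵥ A i / trace (Aᵀ * A)) *
        (trace (Eᵀ * E) - (A i ᵥ* E) ⬝ᵥ (A i ᵥ* E) / (A i ⬝ᵥ A i))
      ≤ (1 - (⨅ k, hAA.eigenvalues k) / trace (Aᵀ * A)) * trace (Eᵀ * E) := by
  set T := trace (Aᵀ * A) with hT_def
  set F := trace (Eᵀ * E)
  set lam := ⨅ k, hAA.eigenvalues k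
  have hterm : ∀ i, (A i ⬝ᵥ A i / T) * (F - (A i ᵥ* E) ⬝ᵥ (A i ᵥ* E) / (A i ⬝ᵥ A i))
      = A i ⬝ᵥ A i * F / T - (A i ᵥ* E) ⬝ᵥ (A i ᵥ* E) / T := by
    intro i
    rcases eq_or_ne (A i ⬝ᵥ A i) 0 with h | h
    · simp [dotProduct_self_eq_zero.mp h]
    · field_simp
  have hrayleigh : lam * F ≤ ∑ i, (A i ᵥ* E) ⬝ᵥ (A i ᵥ* E) :=
    calc lam * F ≤ trace (Eᵀ * (Aᵀ * A) * E) :=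
          mul_trace_transpose_mul_self_le hAA (fun k => ciInf_le (Finite.bddBelow_range _) k) E
      _ = trace ((A * E)ᵀ * (A * E)) := by simp only [transpose_mul, Matrix.mul_assoc]
      _ = _ := trace_transpose_mul_self_eq_sum (A * E)
  rw [Finset.sum_congr rfl fun i _ => hterm i, Finset.sum_sub_distrib, ← Finset.sum_div,
    ← Finset.sum_div, ← Finset.sum_mul, ← trace_transpose_mul_self_eq_sum, ← hT_def]
  have hT : 0 ≤ T := trace_transpose_mul_self_nonneg A
  rcases hT.eq_or_lt with hT_zero | hT_pos
  · rw [← hT_zero]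
    simpa using trace_transpose_mul_self_nonneg E
  · rw [mul_div_cancel_left₀ F hT_pos.ne', sub_mul, one_mul, div_mul_eq_mul_div]
    gcongr

end Matrix

theorem stmt_14_general {m n p q : ℕ}
    (A : Matrix (Fin p) (Fin m) ℝ) (B : Matrix (Fin n) (Fin q) ℝ)
    (hB : B.rank = n)
    (Xs X : Matrix (Fin m) (Fin n) ℝ) :
    let C : Matrix (Fin p) (Fin q) ℝ := A * Xs * B
    let Bd : Matrix (Fin q) (Fin n) ℝ := Bᵀ * (B * Bᵀ)⁻¹
    let Xp : Fin p → Matrix (Fin m) (Fin n) ℝ := fun i =>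
      X + (1 / (A i ⬝ᵥ A i)) • vecMulVec (A i) ((C i - (A i ᵥ* X) ᵥ* B) ᵥ* Bd)
    ∀ (hAA : (Aᵀ * A).IsHermitian),
      ∑ i, ((A i ⬝ᵥ A i) / Matrix.trace (Aᵀ * A)) *
          Matrix.trace ((Xp i - Xs)ᵀ * (Xp i - Xs))
      ≤ (1 - (⨅ k, hAA.eigenvalues k) / Matrix.trace (Aᵀ * A)) *
          Matrix.trace ((X - Xs)ᵀ * (X - Xs)) := by
  intro C Bd Xp hAA
  have hBd : B * Bd = 1 := mul_transpose_mul_inv_eq_one (by simpa using hB)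
  have hstep : ∀ i, trace ((Xp i - Xs)ᵀ * (Xp i - Xs)) = trace ((X - Xs)ᵀ * (X - Xs))
      - (A i ᵥ* (X - Xs)) ⬝ᵥ (A i ᵥ* (X - Xs)) / (A i ⬝ᵥ A i) := fun i => by
    rw [← trace_transpose_mul_self_sub_projection, ← kaczmarz_update_sub _ (A i) X Xs hBd]
    rfl
  simp only [hstep]
  exact sum_weighted_trace_sub_le A hAA (X - Xs)

/-- randomized Kaczmarz for `A` (RK-A), one-step expected decrease. -/
theorem stmt_14 {m n p q : ℕ}
    (A : Matrix (Fin p) (Fin m) ℝ) (B : Matrix (Fin n) (Fin q) ℝ)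
    (hA : ∀ i, A i ≠ 0) (hB : B.rank = n)
    (Xs X : Matrix (Fin m) (Fin n) ℝ) :
    let C : Matrix (Fin p) (Fin q) ℝ := A * Xs * B
    let Bd : Matrix (Fin q) (Fin n) ℝ := Bᵀ * (B * Bᵀ)⁻¹
    let Xp : Fin p → Matrix (Fin m) (Fin n) ℝ := fun i =>
      X + (1 / (A i ⬝ᵥ A i)) • vecMulVec (A i) ((C i - (A i ᵥ* X) ᵥ* B) ᵥ* Bd)
    ∀ (hAA : (Aᵀ * A).IsHermitian),
      ∑ i, ((A i ⬝ᵥ A i) / Matrix.trace (Aᵀ * A)) *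
          Matrix.trace ((Xp i - Xs)ᵀ * (Xp i - Xs))
      ≤ (1 - (⨅ k, hAA.eigenvalues k) / Matrix.trace (Aᵀ * A)) *
          Matrix.trace ((X - Xs)ᵀ * (X - Xs)) :=
  stmt_14_general A B hB Xs X
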